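/- Let t > 0, −π/3 < θ < π/3 and (θ, t) ≠ (0, 1). Then the ten rank-one matrices |z⟩⟨z| ∈ M₉(ℂ), where z ranges over the ten product vectors z₁(1,1,1), z₁(−1,1,1), z₁(1,−1,1), z₁(1,1,−1), z₂(1), z₂(−1), z₃(1), z₃(−1), z₄(1), z₄(−1), are linearly independent over ℂ. -/

import Mathlib

open Complex Matrix BigOperators

/-- The tensor (Kronecker) product of two vectors in `ℂ³`, as a vector in `ℂ⁹`:
the component `ξ_i η_j` sits at index `3i + j` (0-based). -/
def kron (ξ η : Fin 3 → ℂ) : Fin 9 → ℂ :=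
  fun k => ξ ⟨k.val / 3, by have := k.isLt; omega⟩ * η ⟨k.val % 3, by have := k.isLt; omega⟩

/-- `z₁(a₁,a₂,a₃) = (a₁,a₂,a₃) ⊗ (ā₁,ā₂,ā₃)`. -/
noncomputable def z1 (a₁ a₂ a₃ : ℂ) : Fin 9 → ℂ :=
  kron ![a₁, a₂, a₃] ![starRingEnd ℂ a₁, starRingEnd ℂ a₂, starRingEnd ℂ a₃]

/-- `z₂(β) = (0, √t β, 1) ⊗ (0, √t β̄, t e^{iθ})`. -/
noncomputable def z2 (t θ : ℝ) (β : ℂ) : Fin 9 → ℂ :=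
  kron ![0, (Real.sqrt t : ℂ) * β, 1]
       ![0, (Real.sqrt t : ℂ) * starRingEnd ℂ β, (t : ℂ) * exp (θ * I)]

/-- `z₃(β) = (1, 0, √t β) ⊗ (t e^{iθ}, 0, √t β̄)`. -/
noncomputable def z3 (t θ : ℝ) (β : ℂ) : Fin 9 → ℂ :=
  kron ![1, 0, (Real.sqrt t : ℂ) * β]
       ![(t : ℂ) * exp (θ * I), 0, (Real.sqrt t : ℂ) * starRingEnd ℂ β]

/-- `z₄(β) = (√t β, 1, 0) ⊗ (√t β̄, t e^{iθ}, 0)`. -/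
noncomputable def z4 (t θ : ℝ) (β : ℂ) : Fin 9 → ℂ :=
  kron ![(Real.sqrt t : ℂ) * β, 1, 0]
       ![(Real.sqrt t : ℂ) * starRingEnd ℂ β, (t : ℂ) * exp (θ * I), 0]

/-- The pure (unnormalized) state `|z⟩⟨z|`. -/
noncomputable def rank1 (v : Fin 9 → ℂ) : Matrix (Fin 9) (Fin 9) ℂ :=
  vecMulVec v (star v)

/-- The separable state `ρ₀(θ,t)`. -/
noncomputable def rho0 (θ t : ℝ) : Matrix (Fin 9) (Fin 9) ℂ :=
  !![3, 0, 0, 0, 1 + exp (-θ * I), 0, 0, 0, 1 + exp (θ * I);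
     0, 1 + (t : ℂ), 0, 0, 0, 0, 0, 0, 0;
     0, 0, 1 + 1 / (t : ℂ), 0, 0, 0, 0, 0, 0;
     0, 0, 0, 1 + 1 / (t : ℂ), 0, 0, 0, 0, 0;
     1 + exp (θ * I), 0, 0, 0, 3, 0, 0, 0, 1 + exp (-θ * I);
     0, 0, 0, 0, 0, 1 + (t : ℂ), 0, 0, 0;
     0, 0, 0, 0, 0, 0, 1 + (t : ℂ), 0, 0;
     0, 0, 0, 0, 0, 0, 0, 1 + 1 / (t : ℂ), 0;
     1 + exp (-θ * I), 0, 0, 0, 1 + exp (θ * I), 0, 0, 0, 3]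

open ComplexConjugate

/-!
Suppose `∑ gᵢ |zᵢ⟩⟨zᵢ| = 0` and read off ten of its entries (indices `0, …, 8`). Since `z₂, z₃, z₄`
are supported on `{4,5,7,8}`, `{0,2,6,8}`, `{0,1,3,4}`, the entries `(1,2), (1,5), (1,8)` see only the
four `z₁`, giving three rows of a `4 × 4` Hadamard system. Each of `(4,7), (0,2), (0,1)` sees besides
them only the part of one pair `z_k(±1)` that is odd in `β`, so the two coefficients of that pair agree.
The entries `(4,4), (8,8), (0,0), (4,8)` see only the total `z₁`-coefficient and the sums over the pairs;
these all vanish because `(4,8)` carries the factor `e^{-iθ} ≠ 2`.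
-/

noncomputable def productStates (t θ : ℝ) : Fin 10 → Matrix (Fin 9) (Fin 9) ℂ :=
  ![rank1 (z1 1 1 1), rank1 (z1 (-1) 1 1), rank1 (z1 1 (-1) 1), rank1 (z1 1 1 (-1)),
    rank1 (z2 t θ 1), rank1 (z2 t θ (-1)),
    rank1 (z3 t θ 1), rank1 (z3 t θ (-1)),
    rank1 (z4 t θ 1), rank1 (z4 t θ (-1))]

theorem rank1_apply (v : Fin 9 → ℂ) (p q : Fin 9) : rank1 v p q = v p * conj (v q) := rfl

theorem entries_of_sum_smul_productStates_eq_zero {t θ : ℝ} (ht : 0 ≤ t) {g : Fin 10 → ℂ}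
    (hg : ∑ i, g i • productStates t θ i = 0) :
    g 0 + g 1 - g 2 - g 3 = 0 ∧
    g 0 - g 1 + g 2 - g 3 = 0 ∧
    g 0 - g 1 - g 2 + g 3 = 0 ∧
    g 0 + g 1 - g 2 - g 3 + t * √t * (g 4 - g 5) = 0 ∧
    g 0 - g 1 + g 2 - g 3 + t * √t * cexp (θ * I) * (g 6 - g 7) = 0 ∧
    g 0 - g 1 - g 2 + g 3 + t ^ 2 * √t * conj (cexp (θ * I)) * (g 8 - g 9) = 0 ∧
    g 0 + g 1 + g 2 + g 3 + t ^ 2 * (g 4 + g 5) + t ^ 2 * (g 8 + g 9) = 0 ∧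
    g 0 + g 1 + g 2 + g 3 + t ^ 2 * (g 4 + g 5) + t ^ 2 * (g 6 + g 7) = 0 ∧
    g 0 + g 1 + g 2 + g 3 + t ^ 2 * (g 6 + g 7) + t ^ 2 * (g 8 + g 9) = 0 ∧
    g 0 + g 1 + g 2 + g 3 + t ^ 2 * conj (cexp (θ * I)) * (g 4 + g 5) = 0 := by
  have entry (p q : Fin 9) : ∑ i, g i * productStates t θ i p q = 0 := by
    simpa [Matrix.sum_apply] using congrFun (congrFun hg p) q
  have hs : (√t : ℂ) * √t = t := by exact_mod_cast Real.mul_self_sqrt ht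
  have he : cexp (θ * I) * conj (cexp (θ * I)) = 1 := by
    rw [← exp_conj, ← exp_add]
    simp
  have E12 := entry 1 2
  have E15 := entry 1 5
  have E18 := entry 1 8
  have E47 := entry 4 7
  have E02 := entry 0 2
  have E01 := entry 0 1
  have E44 := entry 4 4
  have E88 := entry 8 8
  have E00 := entry 0 0
  have E48 := entry 4 8
  simp [Fin.sum_univ_succ, productStates, rank1_apply, z1, z2, z3, z4, kron, hs]
    at E12 E15 E18 E47 E02 E01 E44 E88 E00 E48
  exact ⟨by linear_combination E12, by linear_combination E15, by linear_combination E18,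
    by linear_combination E47, by linear_combination E02, by linear_combination E01,
    by linear_combination E44 - t ^ 2 * (g 8 + g 9) * he,
    by linear_combination E88 - t ^ 2 * (g 4 + g 5) * he,
    by linear_combination E00 - t ^ 2 * (g 6 + g 7) * he, by linear_combination E48⟩

section Solving

variable {R : Type*} [CommRing R] [IsDomain R]

theorem eq_zero_of_sign_sums [NeZero (2 : R)] {a b c d : R} (h₀ : a + b + c + d = 0)
    (h₁ : a + b - c - d = 0) (h₂ : a - b + c - d = 0) (h₃ : a - b - c + d = 0) :
    a = 0 ∧ b = 0 ∧ c = 0 ∧ d = 0 := by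
  have h4 : (4 : R) ≠ 0 := by
    simpa [show (4 : R) = 2 * 2 by norm_num] using NeZero.ne (2 : R)
  refine ⟨?_, ?_, ?_, ?_⟩ <;> refine (mul_eq_zero.1 ?_).resolve_left h4
  · linear_combination h₀ + h₁ + h₂ + h₃
  · linear_combination h₀ + h₁ - h₂ - h₃
  · linear_combination h₀ - h₁ + h₂ - h₃
  · linear_combination h₀ - h₁ - h₂ + h₃

theorem eq_zero_of_pair_sums {S a b c k w : R} (hk : k ≠ 0) (hw : w ≠ 2)
    (hac : S + k * a + k * c = 0) (hab : S + k * a + k * b = 0)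
    (hbc : S + k * b + k * c = 0) (hwa : S + k * w * a = 0) :
    S = 0 ∧ a = 0 ∧ b = 0 ∧ c = 0 := by
  have hc_eq_b : c = b := mul_left_cancel₀ hk (by linear_combination hac - hab)
  have ha_eq_c : a = c := mul_left_cancel₀ hk (by linear_combination hab - hbc)
  have ha : a = 0 := by
    have : k * (2 - w) * a = 0 := by
      linear_combination hab - hwa + k * ha_eq_c + k * hc_eq_b
    exact (mul_eq_zero.1 this).resolve_left (mul_ne_zero hk (sub_ne_zero.2 hw.symm))
  subst ha
  exact ⟨by simpa using hwa, rfl, by rw [ha_eq_c, hc_eq_b], ha_eq_c.symm⟩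

theorem eq_zero_of_add_of_mul_sub [NeZero (2 : R)] {k a b : R} (hk : k ≠ 0)
    (hadd : a + b = 0) (hsub : k * (a - b) = 0) : a = 0 ∧ b = 0 := by
  obtain rfl : a = b := sub_eq_zero.1 ((mul_eq_zero.1 hsub).resolve_left hk)
  have h2a : 2 * a = 0 := by linear_combination hadd
  have ha : a = 0 := (mul_eq_zero.1 h2a).resolve_left two_ne_zero
  exact ⟨ha, ha⟩

end Solving

theorem ten_pure_product_states_linearIndependent (t θ : ℝ) (ht : 0 < t) :
    LinearIndependent ℂ
      (![rank1 (z1 1 1 1), rank1 (z1 (-1) 1 1), rank1 (z1 1 (-1) 1), rank1 (z1 1 1 (-1)),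
         rank1 (z2 t θ 1), rank1 (z2 t θ (-1)),
         rank1 (z3 t θ 1), rank1 (z3 t θ (-1)),
         rank1 (z4 t θ 1), rank1 (z4 t θ (-1))] :
        Fin 10 → Matrix (Fin 9) (Fin 9) ℂ) := by
  rw [Fintype.linearIndependent_iff]
  intro g hg
  obtain ⟨E12, E15, E18, E47, E02, E01, E44, E88, E00, E48⟩ :=
    entries_of_sum_smul_productStates_eq_zero ht.le hg
  have ht' : (t : ℂ) ≠ 0 := by exact_mod_cast ht.ne'
  have hs : (√t : ℂ) ≠ 0 := by exact_mod_cast (Real.sqrt_pos.2 ht).ne'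
  have he : cexp (θ * I) ≠ 0 := exp_ne_zero _
  have hconj : conj (cexp (θ * I)) ≠ 2 := fun h => by
    have := norm_exp_ofReal_mul_I θ
    rw [← Complex.norm_conj, h] at this
    norm_num at this
  obtain ⟨hS, h45, h67, h89⟩ := eq_zero_of_pair_sums (pow_ne_zero 2 ht') hconj E44 E88 E00 E48
  obtain ⟨h0, h1, h2, h3⟩ := eq_zero_of_sign_sums hS E12 E15 E18
  obtain ⟨h4, h5⟩ := eq_zero_of_add_of_mul_sub (mul_ne_zero ht' hs) h45
    (by linear_combination E47 - E12)
  obtain ⟨h6, h7⟩ := eq_zero_of_add_of_mul_sub (mul_ne_zero (mul_ne_zero ht' hs) he) h67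
    (by linear_combination E02 - E15)
  obtain ⟨h8, h9⟩ := eq_zero_of_add_of_mul_sub
    (mul_ne_zero (mul_ne_zero (pow_ne_zero 2 ht') hs) ((map_ne_zero _).2 he)) h89
    (by linear_combination E01 - E18)
  intro i
  fin_cases i <;> assumption
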